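/- arXiv:1101.0033 — 2 statements merged into one kernel-verified Lean document; each statement's English description precedes it below -/
import Mathlib

section
/- Let d, m ≥ 1 be integers and let π be a non-crossing ε_d-partition of [2dm]. Then π has at least dm − 2m blocks of cardinality exactly two, and every block of π has cardinality at most 2m. -/
open Finset

/-- Two elements lie in the same block of the partition `P`. -/
def SameBlock {N : ℕ} (P : Finpartition (univ : Finset (Fin N))) (s t : Fin N) : Prop :=
  ∃ B ∈ P.parts, s ∈ B ∧ t ∈ B

/-- A partition of `[N]` is non-crossing if there are no `s₁ < t₁ < s₂ < t₂` with
`s₁ ∼ s₂`, `t₁ ∼ t₂` but `s₁ ≁ t₁`. -/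
def NonCrossing {N : ℕ} (P : Finpartition (univ : Finset (Fin N))) : Prop :=
  ∀ s₁ t₁ s₂ t₂ : Fin N, s₁ < t₁ → t₁ < s₂ → s₂ < t₂ →
    SameBlock P s₁ s₂ → SameBlock P t₁ t₂ → SameBlock P s₁ t₁

/-- Every block has even cardinality. -/
def EvenPartition {N : ℕ} (P : Finpartition (univ : Finset (Fin N))) : Prop :=
  ∀ B ∈ P.parts, Even B.card

/-- The (two-valued) function `ε` alternates along each block of `P`, listed in
increasing order. -/
def Alternating {N : ℕ} (ε : Fin N → Bool) (P : Finpartition (univ : Finset (Fin N))) : Prop :=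
  ∀ B ∈ P.parts, (Finset.sort B (· ≤ ·)).Chain' (fun a b => ε a ≠ ε b)

/-- An `ε`-partition: an even partition on each block of which `ε` alternates. -/
def EpsPartition {N : ℕ} (ε : Fin N → Bool) (P : Finpartition (univ : Finset (Fin N))) : Prop :=
  EvenPartition P ∧ Alternating ε P

/-- A pairing: every block has exactly two elements. -/
def IsPairing {N : ℕ} (P : Finpartition (univ : Finset (Fin N))) : Prop :=
  ∀ B ∈ P.parts, B.card = 2

/-- `σ` refines `π`: every block of `σ` is contained in a block of `π` (i.e. `σ ≤ π`). -/
def Refines {N : ℕ} (σ π : Finpartition (univ : Finset (Fin N))) : Prop :=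
  ∀ B ∈ σ.parts, ∃ C ∈ π.parts, B ⊆ C

/-- The pattern `ε_d = (1^d ∗^d)^m` on `[2dm]` (0-based; `true` codes `1`, `false` codes `∗`). -/
def epsd (d m : ℕ) : Fin (2*d*m) → Bool := fun j => decide ((j : ℕ) / d % 2 = 0)

/-- `ker I ≥ π` : the function `I` is constant on every block of `π`. -/
def KerGe {N : ℕ} {Λ : Type*} (π : Finpartition (univ : Finset (Fin N))) (I : Fin N → Λ) : Prop :=
  ∀ B ∈ π.parts, ∀ s ∈ B, ∀ t ∈ B, I s = I t

/-- The position `(j-1)d + l` in `[2dm]`, splitting `[2dm]` into `2m` consecutive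
segments of length `d`. -/
def seg (d m : ℕ) (j : Fin (2*m)) (l : Fin d) : Fin (2*d*m) :=
  ⟨j.1 * d + l.1, by
    have hj : j.1 + 1 ≤ 2*m := j.2
    have hl : l.1 < d := l.2
    calc j.1 * d + l.1 < j.1 * d + d := by linarith
      _ = (j.1 + 1) * d := by ring
      _ ≤ (2*m) * d := Nat.mul_le_mul hj le_rfl
      _ = 2*d*m := by ring⟩

/-!
Call an ascent of a word in `{1, ∗}` a pair of consecutive letters `∗ 1` (in `Bool`, where `true`
codes `1`, this is `false < true`); `ε_d` has `m - 1` ascents. A non-crossing partition always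
has a block `I` that is an interval of the ground set, and deleting such a block of size `2r` on
which `ε` alternates destroys at least `r - 1` ascents. By induction on the number of blocks,
`∑_B (|B| - 2) ≤ 2 (m - 1)`, which bounds every block by `2m` and forces all but at most `4m - 4`
of the `2dm` points into blocks of size two.
-/

namespace List

section Ascents

variable {α : Type*} [LT α] [DecidableLT α]

def ascents : List α → ℕ
  | a :: b :: l => (if a < b then 1 else 0) + ascents (b :: l)
  | _ => 0

@[simp] lemma ascents_nil : ([] : List α).ascents = 0 := rfl

@[simp] lemma ascents_singleton (a : α) : [a].ascents = 0 := rfl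

@[simp] lemma ascents_cons_cons (a b : α) (l : List α) :
    (a :: b :: l).ascents = (if a < b then 1 else 0) + (b :: l).ascents := rfl

lemma ascents_le_length_sub_one : ∀ l : List α, l.ascents ≤ l.length - 1
  | [] | [_] => by simp
  | a :: b :: l => by
    have := ascents_le_length_sub_one (b :: l)
    simp only [ascents_cons_cons, length_cons] at this ⊢
    split <;> omega

lemma ascents_append : ∀ l₁ l₂ : List α,
    (l₁ ++ l₂).ascents =
      l₁.ascents + l₂.ascents + (l₁.getLast?.toList ++ l₂.head?.toList).ascents
  | [], l₂ => by cases l₂ <;> simp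
  | [a], [] => by simp
  | [a], b :: l₂ => by simp; omega
  | a :: b :: l₁, l₂ => by
    simp only [cons_append, ascents_cons_cons, getLast?_cons_cons]
    rw [← cons_append, ascents_append (b :: l₁) l₂]
    omega

lemma ascents_getLast?_append_head?_le_one (l₁ l₂ : List α) :
    (l₁.getLast?.toList ++ l₂.head?.toList).ascents ≤ 1 := by
  refine (ascents_le_length_sub_one _).trans ?_
  cases l₁.getLast? <;> cases l₂.head? <;> simp

lemma ascents_flatten_le : ∀ L : List (List α),
    L.flatten.ascents ≤ (L.map ascents).sum + (L.length - 1)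
  | [] => by simp
  | [l] => by simp
  | l :: l' :: L => by
    have ih := ascents_flatten_le (l' :: L)
    have hjoin := ascents_getLast?_append_head?_le_one l (l' :: L).flatten
    rw [flatten_cons, ascents_append]
    simp only [map_cons, sum_cons, length_cons] at ih ⊢
    omega

end Ascents

lemma ascents_eq_zero_of_isChain_ge {α : Type*} [Preorder α] [DecidableLT α] :
    ∀ {l : List α}, l.IsChain (· ≥ ·) → l.ascents = 0
  | [], _ | [_], _ => rfl
  | a :: b :: l, h => by
    rw [isChain_cons_cons] at h
    simp [not_lt_of_ge h.1, ascents_eq_zero_of_isChain_ge h.2]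

lemma ascents_cons_of_isChain_ne : ∀ {b : Bool} {l : List Bool}, (b :: l).IsChain (· ≠ ·) →
    (b :: l).ascents = (l.length + (!b).toNat) / 2
  | b, [], _ => by cases b <;> simp
  | b, c :: l, h => by
    rw [isChain_cons_cons] at h
    rw [ascents_cons_cons, ascents_cons_of_isChain_ne h.2]
    cases b <;> cases c <;> simp at h ⊢; omega

lemma length_add_two_mul_ascents_le (A M C : List Bool) (hM : M.IsChain (· ≠ ·))
    (hev : Even M.length) : M.length + 2 * (A ++ C).ascents ≤ 2 + 2 * (A ++ M ++ C).ascents := by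
  obtain _ | ⟨b, M⟩ := M
  · simp
  have hM := ascents_cons_of_isChain_ne hM
  obtain ⟨k, hk⟩ := hev
  rw [ascents_append A C, append_assoc, ascents_append A, ascents_append (b :: M) C]
  simp only [length_cons, head?_cons, head?_append, Option.toList_some, Option.some_or] at *
  rcases A.getLast? with _ | ⟨_ | _⟩ <;> rcases C.head? with _ | ⟨_ | _⟩ <;> cases b <;>
    simp +decide at hM ⊢ <;> omega

end List

namespace Finset

variable {α : Type*} [LinearOrder α]

lemma exists_sort_eq_append {s I : Finset α} (hI : I.Nonempty) (hIs : I ⊆ s)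
    (hint : ∀ x ∈ s, ∀ a ∈ I, ∀ b ∈ I, a ≤ x → x ≤ b → x ∈ I) :
    ∃ A C : List α, s.sort = A ++ I.sort ++ C ∧ (s \ I).sort = A ++ C := by
  set A := (s \ I).filter fun x => ∀ i ∈ I, x < i
  set C := (s \ I).filter fun x => ∀ i ∈ I, i < x
  have hAI : ∀ a ∈ A, ∀ i ∈ I, a < i := fun a ha => (mem_filter.1 ha).2
  have hIC : ∀ i ∈ I, ∀ c ∈ C, i < c := fun i hi c hc => (mem_filter.1 hc).2 i hi
  obtain ⟨i₀, hi₀⟩ := hI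
  have hAC : ∀ a ∈ A, ∀ c ∈ C, a < c := fun a ha c hc =>
    (hAI a ha i₀ hi₀).trans (hIC i₀ hi₀ c hc)
  have hsplit : ∀ x, x ∈ s \ I ↔ x ∈ A ∨ x ∈ C := by
    intro x
    simp only [A, C, mem_filter, ← and_or_left, iff_self_and]
    intro hx
    rw [mem_sdiff] at hx
    by_contra! h
    obtain ⟨⟨a, ha, hax⟩, ⟨b, hb, hxb⟩⟩ := h
    exact hx.2 (hint x hx.1 a ha b hb hax hxb)
  refine ⟨A.sort, C.sort, ?_, ?_⟩
  · refine (sortedLT_sort _).pairwise.eq_of_mem_iff ?_ fun x => ?_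
    · simp only [List.pairwise_append, (sortedLT_sort _).pairwise, mem_sort, List.mem_append]
      grind
    · simp only [List.mem_append, mem_sort]
      have := hsplit x
      grind
  · refine (sortedLT_sort _).pairwise.eq_of_mem_iff ?_ fun x => ?_
    · simp only [List.pairwise_append, (sortedLT_sort _).pairwise, mem_sort]
      grind
    · simp only [List.mem_append, mem_sort, hsplit]

end Finset

namespace Finpartition

section

variable {α : Type*} [DecidableEq α] {s : Finset α}

lemma sup_parts_erase (P : Finpartition s) {I : Finset α} (hI : I ∈ P.parts) :
    (P.parts.erase I).sup id = s \ I := by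
  ext x
  simp only [mem_sup, mem_erase, id, mem_sdiff]
  constructor
  · rintro ⟨B, ⟨hBI, hB⟩, hxB⟩
    exact ⟨P.subset hB hxB, fun hxI => hBI (P.eq_of_mem_parts hB hI hxB hxI)⟩
  · rintro ⟨hx, hxI⟩
    obtain ⟨B, hB, hxB⟩ := P.exists_mem hx
    exact ⟨B, ⟨by rintro rfl; exact hxI hxB, hB⟩, hxB⟩

def erasePart (P : Finpartition s) {I : Finset α} (hI : I ∈ P.parts) : Finpartition (s \ I) :=
  P.ofSubset (P.parts.erase_subset I) (P.sup_parts_erase hI)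

@[simp] lemma erasePart_parts (P : Finpartition s) {I : Finset α} (hI : I ∈ P.parts) :
    (P.erasePart hI).parts = P.parts.erase I := rfl

lemma card_le_two_mul_card_filter_add (P : Finpartition s) (hev : ∀ B ∈ P.parts, Even #B) :
    #s ≤ 2 * #(P.parts.filter fun B => #B = 2) + 2 * ∑ B ∈ P.parts, (#B - 2) := by
  rw [← P.sum_card_parts, card_filter, mul_sum, mul_sum, ← sum_add_distrib]
  refine sum_le_sum fun B hB => ?_
  obtain ⟨k, hk⟩ := hev B hB
  have := (P.nonempty_of_mem_parts hB).card_pos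
  split <;> omega

end

variable {α : Type*} [LinearOrder α] {s : Finset α}

def IsNonCrossing (P : Finpartition s) : Prop :=
  ∀ a b c d : α, a < b → b < c → c < d → (∃ B ∈ P.parts, a ∈ B ∧ c ∈ B) →
    (∃ B ∈ P.parts, b ∈ B ∧ d ∈ B) → ∃ B ∈ P.parts, a ∈ B ∧ b ∈ B

namespace IsNonCrossing

variable {P : Finpartition s}

lemma eq_of_interleaved (hP : P.IsNonCrossing) {a b c d : α} (hab : a < b) (hbc : b < c)
    (hcd : c < d) {B B' : Finset α} (hB : B ∈ P.parts) (hB' : B' ∈ P.parts) (ha : a ∈ B)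
    (hc : c ∈ B) (hb : b ∈ B') (hd : d ∈ B') : B = B' := by
  obtain ⟨B'', hB'', ha', hb'⟩ :=
    hP a b c d hab hbc hcd ⟨B, hB, ha, hc⟩ ⟨B', hB', hb, hd⟩
  exact (P.eq_of_mem_parts hB hB'' ha ha').trans (P.eq_of_mem_parts hB'' hB' hb' hb)

lemma ofSubset (hP : P.IsNonCrossing) {t : Finset α} {parts : Finset (Finset α)}
    (hsub : parts ⊆ P.parts) (hsup : parts.sup id = t) :
    (P.ofSubset hsub hsup).IsNonCrossing := by
  rintro a b c d hab hbc hcd ⟨B, hB, ha, hc⟩ ⟨B', hB', hb, hd⟩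
  obtain ⟨B'', hB'', ha', hb'⟩ :=
    hP a b c d hab hbc hcd ⟨B, hsub hB, ha, hc⟩ ⟨B', hsub hB', hb, hd⟩
  exact ⟨B, hB, ha, P.eq_of_mem_parts hB'' (hsub hB) ha' ha ▸ hb'⟩

lemma exists_interval_part (hP : P.IsNonCrossing) (hne : P.parts.Nonempty) :
    ∃ I ∈ P.parts, ∀ x ∈ s, ∀ a ∈ I, ∀ b ∈ I, a ≤ x → x ≤ b → x ∈ I := by
  let span (B : Finset α) := s.filter fun x => ∃ a ∈ B, ∃ b ∈ B, a ≤ x ∧ x ≤ b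
  -- a part whose span meets `s` in as few points as possible is an interval
  obtain ⟨I, hI, hmin⟩ := P.parts.exists_min_image (fun B => #(span B)) hne
  refine ⟨I, hI, fun x hx a ha b hb hax hxb => ?_⟩
  by_contra hxI
  obtain ⟨B, hB, hxB⟩ := P.exists_mem hx
  have hBI : B ≠ I := by rintro rfl; exact hxI hxB
  have hax : a < x := lt_of_le_of_ne hax (by rintro rfl; exact hxI ha)
  have hxb : x < b := lt_of_le_of_ne hxb (by rintro rfl; exact hxI hb)
  -- otherwise `B` and `I` would cross
  have hinside : ∀ y ∈ B, (∃ a ∈ I, a < y) ∧ ∃ b ∈ I, y < b := by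
    intro y hy
    have hyI : y ∉ I := fun hyI => hBI (P.eq_of_mem_parts hB hI hy hyI)
    constructor
    · by_contra! h
      exact hBI (hP.eq_of_interleaved (lt_of_le_of_ne (h a ha) (by rintro rfl; exact hyI ha))
        hax hxb hB hI hy hxB ha hb)
    · by_contra! h
      exact hBI (hP.eq_of_interleaved hax hxb
        (lt_of_le_of_ne (h b hb) (by rintro rfl; exact hyI hb)) hI hB ha hb hxB hy).symm
  have hsub : span B ⊆ span I := by
    intro z hz
    simp only [span, mem_filter] at hz ⊢
    obtain ⟨hz, a', ha', b', hb', haz, hzb⟩ := hz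
    obtain ⟨⟨i, hi, hia⟩, -⟩ := hinside a' ha'
    obtain ⟨-, ⟨j, hj, hbj⟩⟩ := hinside b' hb'
    exact ⟨hz, i, hi, j, hj, hia.le.trans haz, hzb.trans hbj.le⟩
  have hssub : span B ⊂ span I := by
    refine (ssubset_iff_of_subset hsub).2 ⟨I.min' ⟨a, ha⟩, ?_, ?_⟩
    · simp only [span, mem_filter]
      exact ⟨P.subset hI (I.min'_mem _), _, I.min'_mem _, _, I.min'_mem _, le_rfl, le_rfl⟩
    · simp only [span, mem_filter, not_and, not_exists]
      intro _ a' ha' _ _ ha'min _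
      obtain ⟨⟨i, hi, hia⟩, -⟩ := hinside a' ha'
      exact (I.min'_le i hi).not_gt (hia.trans_le ha'min)
  exact (hmin B hB).not_gt (card_lt_card hssub)

theorem sum_card_sub_two_le_ascents (ε : α → Bool) (hP : P.IsNonCrossing)
    (hev : ∀ B ∈ P.parts, Even #B)
    (halt : ∀ B ∈ P.parts, B.sort.IsChain fun a b => ε a ≠ ε b) :
    ∑ B ∈ P.parts, (#B - 2) ≤ 2 * (s.sort.map ε).ascents := by
  induction hn : #P.parts generalizing s with
  | zero => simp [card_eq_zero.1 hn]
  | succ n ih =>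
    obtain ⟨I, hI, hint⟩ := hP.exists_interval_part (card_pos.1 (by omega))
    obtain ⟨A, C, hs, hsI⟩ := exists_sort_eq_append (P.nonempty_of_mem_parts hI)
      (P.subset hI) hint
    have hrest : ∑ B ∈ P.parts.erase I, (#B - 2) ≤ 2 * ((s \ I).sort.map ε).ascents := by
      simpa using ih (P := P.erasePart hI) (hP.ofSubset _ _)
        (fun B hB => hev B (mem_of_mem_erase hB)) (fun B hB => halt B (mem_of_mem_erase hB))
        (by simp [card_erase_of_mem hI, hn])
    have hI2 : 2 ≤ #I := by
      obtain ⟨k, hk⟩ := hev I hI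
      have := (P.nonempty_of_mem_parts hI).card_pos
      omega
    have hkey := List.length_add_two_mul_ascents_le (A.map ε) (I.sort.map ε) (C.map ε)
      ((List.isChain_map ε).2 (halt I hI)) (by simpa using hev I hI)
    rw [← sum_erase_add _ _ hI]
    simp only [hs, hsI, List.map_append, List.length_map, length_sort] at hrest hkey ⊢
    omega

end IsNonCrossing

end Finpartition

lemma epsd_mk (d m i j : ℕ) (hj : j < 2 * d) (h : 2 * d * i + j < 2 * d * m) :
    epsd d m ⟨2 * d * i + j, h⟩ = decide (j < d) := by
  have hd : 0 < d := by omega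
  have hdiv : (2 * d * i + j) / d = 2 * i + j / d := by
    rw [show 2 * d * i = d * (2 * i) by ring, Nat.mul_add_div hd]
  have hlt : j / d < 2 := Nat.div_lt_of_lt_mul (by linarith)
  have hzero : j / d = 0 ↔ j < d := by rw [Nat.div_eq_zero_iff]; omega
  simp only [epsd, hdiv, decide_eq_decide, ← hzero]
  generalize j / d = q at hlt ⊢
  omega

lemma ascents_map_epsd_le (d m : ℕ) :
    ((List.finRange (2 * d * m)).map (epsd d m)).ascents ≤ m - 1 := by
  have hblock : (List.ofFn fun j : Fin (2 * d) => decide (j.1 < d)).ascents = 0 := by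
    refine List.ascents_eq_zero_of_isChain_ge (List.sortedGE_ofFn_iff.2 fun j j' hjj' => ?_).isChain
    simpa [Bool.le_iff_imp] using (Fin.le_iff_val_le_val.1 hjj').trans_lt
  -- `ε_d` is `m` copies of the ascent-free word `1^d ∗^d`
  rw [← List.ofFn_eq_map, List.ofFn_mul']
  refine (List.ascents_flatten_le _).trans ?_
  simp [epsd_mk, hblock]

theorem eps_partition_block_structure_general (d m : ℕ)
    (π : Finpartition (univ : Finset (Fin (2*d*m))))
    (hNC : NonCrossing π) (hπ : EpsPartition (epsd d m) π) :
    d*m - 2*m ≤ (π.parts.filter fun B => B.card = 2).card ∧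
      ∀ B ∈ π.parts, B.card ≤ 2*m := by
  obtain ⟨hEven, hAlt⟩ := hπ
  have hexcess : ∑ B ∈ π.parts, (#B - 2) ≤ 2 * (m - 1) := by
    have := Finpartition.IsNonCrossing.sum_card_sub_two_le_ascents (epsd d m) hNC hEven hAlt
    rw [Fin.sort_univ] at this
    linarith [ascents_map_epsd_le d m]
  have hcard : 2 * (d * m) ≤
      2 * #(π.parts.filter fun B => #B = 2) + 2 * ∑ B ∈ π.parts, (#B - 2) := by
    rw [← mul_assoc]
    simpa using π.card_le_two_mul_card_filter_add hEven
  refine ⟨by generalize d * m = n at hcard; omega, fun B hB => ?_⟩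
  have hBexcess := single_le_sum (f := fun B => #B - 2) (fun _ _ => Nat.zero_le _) hB
  have hBuniv : #B ≤ 2 * d * m := by simpa using card_le_univ B
  have := (π.nonempty_of_mem_parts hB).card_pos
  rcases Nat.eq_zero_or_pos m with rfl | hm
  · simp only [mul_zero, nonpos_iff_eq_zero] at hBuniv
    omega
  · omega

/-- block-structure assertion of Proposition 3.5 of the paper:
a non-crossing `ε_d`-partition of `[2dm]` has at least `dm − 2m` blocks of size two,
and all its blocks have size at most `2m`. -/
theorem eps_partition_block_structure (d m : ℕ) (hd : 1 ≤ d) (hm : 1 ≤ m)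
    (π : Finpartition (univ : Finset (Fin (2*d*m))))
    (hNC : NonCrossing π) (hπ : EpsPartition (epsd d m) π) :
    d*m - 2*m ≤ (π.parts.filter fun B => B.card = 2).card ∧
      ∀ B ∈ π.parts, B.card ≤ 2*m :=
  eps_partition_block_structure_general d m π hNC hπ
end

section
/- Let d, m ≥ 1 and let π be a non-crossing ε_d-partition of [2dm]. Let A ⊆ [2dm] be the union of all two-element blocks of π. Then: (i) for every non-crossing ε_d-partition σ of [2dm] with σ ≤ π, every two-element block of π is also a block of σ (so σ restricted to A equals π restricted to A); and consequently (ii) the map σ ↦ σ|_{[2dm]∖A} is injective from {σ ∈ NC^{ε_d}(2dm) : σ ≤ π} into the set of even non-crossing partitions of the ordered set [2dm]∖A, whose cardinality is at most 4m. -/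
open Finset

/-!
An even `σ ≤ π` cannot split a two-element block of `π`, since a nonempty even subset of a
pair is the whole pair. Hence every such `σ` contains all pairs of `π`, and it is determined
by its blocks off their union `A`.

For the bound on the complement of `A`: a non-crossing family of disjoint blocks always has a
block that is an interval of its support `S`. Removing it costs at most one sign change of
`ε` along `S`, while along the block itself `ε` changes sign `|B| - 1` times. By induction,
`|S| ≤ 2 · #blocks + (sign changes of ε along S)`. Along `[2dm]` the pattern `ε_d` changes sign
at most `2m` times, and the blocks of `π` that are not pairs have at least four elements,
so `|[2dm] ∖ A| ≤ 2 · 2m`.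
-/

namespace List

variable {α : Type*} (f : α → Bool)

def countChanges : List α → ℕ
  | [] => 0
  | [_] => 0
  | a :: b :: l => (if f a = f b then 0 else 1) + countChanges (b :: l)

@[simp]
theorem countChanges_nil : countChanges f [] = 0 := rfl

@[simp]
theorem countChanges_singleton (a : α) : countChanges f [a] = 0 := rfl

theorem countChanges_cons_cons (a b : α) (l : List α) :
    countChanges f (a :: b :: l) = (if f a = f b then 0 else 1) + countChanges f (b :: l) := rfl

theorem countChanges_le_cons (a : α) (l : List α) : countChanges f l ≤ countChanges f (a :: l) := by
  cases l with
  | nil => simp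
  | cons b t => rw [countChanges_cons_cons]; omega

theorem countChanges_cons_le (a : α) (l : List α) :
    countChanges f (a :: l) ≤ countChanges f l + 1 := by
  cases l with
  | nil => simp
  | cons b t => rw [countChanges_cons_cons]; split <;> omega

theorem countChanges_add_le_append :
    ∀ l₁ l₂ : List α, countChanges f l₁ + countChanges f l₂ ≤ countChanges f (l₁ ++ l₂)
  | [], _ => by simp
  | [a], l₂ => by simpa using countChanges_le_cons f a l₂
  | a :: b :: t, l₂ => by
    have ih := countChanges_add_le_append (b :: t) l₂
    simp only [cons_append, countChanges_cons_cons] at *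
    omega

theorem countChanges_append_le :
    ∀ l₁ l₂ : List α, countChanges f (l₁ ++ l₂) ≤ countChanges f l₁ + countChanges f l₂ + 1
  | [], _ => by simp
  | [a], l₂ => by simpa using countChanges_cons_le f a l₂
  | a :: b :: t, l₂ => by
    have ih := countChanges_append_le (b :: t) l₂
    simp only [cons_append, countChanges_cons_cons] at *
    omega

theorem countChanges_append_add_le (u v w : List α) :
    countChanges f (u ++ w) + countChanges f v ≤ countChanges f (u ++ v ++ w) + 1 := by
  have := countChanges_append_le f u w
  have := countChanges_add_le_append f u v
  have := countChanges_add_le_append f (u ++ v) w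
  omega

theorem length_le_countChanges_add_one :
    ∀ {l : List α}, l.IsChain (fun a b => f a ≠ f b) → l.length ≤ countChanges f l + 1
  | [], _ => by simp
  | [_], _ => by simp
  | a :: b :: t, h => by
    rw [isChain_cons_cons] at h
    have ih := length_le_countChanges_add_one h.2
    rw [countChanges_cons_cons, if_neg h.1]
    simp only [length_cons] at *
    omega

section MonotoneBound

variable {f} {g : α → ℕ} (hfg : ∀ a b, g a = g b → f a = f b) {c : ℕ}
include hfg

theorem countChanges_cons_add_le :
    ∀ {a : α} {l : List α}, (a :: l).Pairwise (fun x y => g x ≤ g y) →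
      (∀ x ∈ a :: l, g x ≤ c) → countChanges f (a :: l) + g a ≤ c
  | a, [], _, hc => by simpa using hc a (mem_singleton_self a)
  | a, b :: t, hl, hc => by
    have hab : g a ≤ g b := rel_of_pairwise_cons hl mem_cons_self
    have ih := countChanges_cons_add_le hl.of_cons fun x hx => hc x (mem_cons_of_mem a hx)
    rw [countChanges_cons_cons]
    by_cases hf : f a = f b
    · rw [if_pos hf]; omega
    · have : g a ≠ g b := fun h => hf (hfg a b h)
      rw [if_neg hf]; omega

theorem countChanges_le_of_pairwise {l : List α} (hl : l.Pairwise (fun x y => g x ≤ g y))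
    (hc : ∀ x ∈ l, g x ≤ c) : countChanges f l ≤ c := by
  cases l with
  | nil => simp
  | cons a t => have := countChanges_cons_add_le hfg hl hc; omega

end MonotoneBound

end List

namespace Finset

variable {α : Type*} [LinearOrder α]

theorem sort_union_of_lt {X Y : Finset α} (h : ∀ a ∈ X, ∀ b ∈ Y, a < b) :
    (X ∪ Y).sort (· ≤ ·) = X.sort (· ≤ ·) ++ Y.sort (· ≤ ·) := by
  have hXY : Disjoint X Y := disjoint_left.2 fun a haX haY => lt_irrefl a (h a haX a haY)
  refine List.Perm.eq_of_pairwise' (pairwise_sort _ _) ?_ ?_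
  · exact List.pairwise_append.2 ⟨pairwise_sort _ _, pairwise_sort _ _,
      fun a ha b hb => (h a ((mem_sort _).1 ha) b ((mem_sort _).1 hb)).le⟩
  · rw [← Multiset.coe_eq_coe, ← Multiset.coe_add, sort_eq, sort_eq, sort_eq,
      ← disjUnion_eq_union X Y hXY]
    rfl

def OrdConnectedIn (B S : Finset α) : Prop :=
  ∀ x ∈ S, ∀ y ∈ B, ∀ z ∈ B, y ≤ x → x ≤ z → x ∈ B

theorem countChanges_sort_sdiff_add_le (f : α → Bool) {S B : Finset α} (hBS : B ⊆ S)
    (hB : B.OrdConnectedIn S) :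
    (S \ B |>.sort (· ≤ ·)).countChanges f + (B.sort (· ≤ ·)).countChanges f ≤
      (S.sort (· ≤ ·)).countChanges f + 1 := by
  set L := (S \ B).filter fun x => ∀ y ∈ B, x < y
  set R := (S \ B).filter fun x => ¬ ∀ y ∈ B, x < y
  have hBR : ∀ y ∈ B, ∀ x ∈ R, y < x := by
    intro y hy x hx
    simp only [R, mem_filter, mem_sdiff, not_forall, not_lt] at hx
    obtain ⟨⟨hxS, hxB⟩, z, hz, hzx⟩ := hx
    by_contra! hxy
    exact hxB (hB x hxS z hz y hy hzx hxy)
  have hLB : ∀ x ∈ L, ∀ y ∈ B ∪ R, x < y := by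
    intro x hx y hy
    have hxB : ∀ z ∈ B, x < z := (mem_filter.1 hx).2
    rcases mem_union.1 hy with hy | hy
    · exact hxB y hy
    · obtain ⟨z, hz, hzy⟩ : ∃ z ∈ B, z ≤ y := by
        simpa only [R, mem_filter, not_forall, not_lt, exists_prop] using (mem_filter.1 hy).2
      exact (hxB z hz).trans_le hzy
  have hLR : ∀ x ∈ L, ∀ y ∈ R, x < y := fun x hx y hy => hLB x hx y (mem_union_right _ hy)
  have hSB : S \ B = L ∪ R := (filter_union_filter_not_eq _ _).symm
  have hS : S = L ∪ (B ∪ R) := by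
    rw [← union_assoc, union_right_comm, ← hSB, sdiff_union_of_subset hBS]
  rw [hSB, hS, sort_union_of_lt hLR, sort_union_of_lt hLB, sort_union_of_lt hBR,
    ← List.append_assoc]
  exact List.countChanges_append_add_le f _ _ _

end Finset

section NonCrossingBlocks

variable {α : Type*} [LinearOrder α]

def NonCrossingBlocks (P : Finset (Finset α)) : Prop :=
  ∀ B ∈ P, ∀ C ∈ P, ∀ s₁ ∈ B, ∀ t₁ ∈ C, ∀ s₂ ∈ B, ∀ t₂ ∈ C,
    s₁ < t₁ → t₁ < s₂ → s₂ < t₂ → B = C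

variable {P : Finset (Finset α)}

theorem NonCrossingBlocks.subset {Q : Finset (Finset α)} (hP : NonCrossingBlocks P) (hQ : Q ⊆ P) :
    NonCrossingBlocks Q :=
  fun B hB C hC => hP B (hQ hB) C (hQ hC)

theorem NonCrossingBlocks.subset_Ioo (hP : NonCrossingBlocks P)
    (hdisj : (P : Set (Finset α)).PairwiseDisjoint id) {B C : Finset α} (hB : B ∈ P) (hC : C ∈ P)
    (hBC : B ≠ C) {x y z : α} (hy : y ∈ B) (hz : z ∈ B) (hx : x ∈ C) (hyx : y < x) (hxz : x < z) :
    ↑C ⊆ Set.Ioo y z := by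
  have hdisjBC : Disjoint B C := hdisj hB hC hBC
  intro c hc
  refine ⟨?_, ?_⟩
  · rcases lt_trichotomy c y with hcy | rfl | hyc
    · exact absurd (hP C hC B hB c hc y hy x hx z hz hcy hyx hxz).symm hBC
    · exact absurd hc (disjoint_left.1 hdisjBC hy)
    · exact hyc
  · rcases lt_trichotomy c z with hcz | rfl | hzc
    · exact hcz
    · exact absurd hc (disjoint_left.1 hdisjBC hz)
    · exact absurd (hP B hB C hC y hy x hx z hz c hc hyx hxz hzc) hBC

theorem NonCrossingBlocks.exists_ordConnectedIn (hP : NonCrossingBlocks P)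
    (hdisj : (P : Set (Finset α)).PairwiseDisjoint id) (hne : P.Nonempty) :
    ∃ B ∈ P, B.OrdConnectedIn (P.biUnion id) := by
  set S := P.biUnion id
  let hull : Finset α → Finset α := fun B => S.filter fun x => ∃ y ∈ B, ∃ z ∈ B, y ≤ x ∧ x ≤ z
  -- A block inside a gap of `B` would have a smaller hull than `B`.
  obtain ⟨B, hB, hmin⟩ := exists_min_image P (fun B => (hull B).card) hne
  refine ⟨B, hB, fun x hxS y hy z hz hyx hxz => ?_⟩
  by_contra hxB
  obtain ⟨C, hC, hxC⟩ := mem_biUnion.1 hxS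
  have hBC : B ≠ C := by rintro rfl; exact hxB hxC
  have hinside := hP.subset_Ioo hdisj hB hC hBC hy hz hxC
    (lt_of_le_of_ne hyx fun h => hxB (h ▸ hy)) (lt_of_le_of_ne hxz fun h => hxB (h ▸ hz))
  have hsub : hull C ⊂ hull B := by
    rw [ssubset_iff_of_subset]
    · refine ⟨y, mem_filter.2 ⟨subset_biUnion_of_mem id hB hy, y, hy, y, hy, le_rfl, le_rfl⟩, ?_⟩
      rintro hyC
      obtain ⟨c, hc, -, -, hcy, -⟩ := (mem_filter.1 hyC).2
      exact (hinside hc).1.not_ge hcy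
    · intro w hw
      obtain ⟨hwS, c, hc, c', hc', hcw, hwc'⟩ := mem_filter.1 hw
      exact mem_filter.2 ⟨hwS, y, hy, z, hz,
        (hinside hc).1.le.trans hcw, hwc'.trans (hinside hc').2.le⟩
  exact (card_lt_card hsub).not_ge (hmin C hC)

theorem card_biUnion_le_two_mul_card_add_countChanges (f : α → Bool)
    (hdisj : (P : Set (Finset α)).PairwiseDisjoint id) (hP : NonCrossingBlocks P)
    (halt : ∀ B ∈ P, (B.sort (· ≤ ·)).IsChain (fun a b => f a ≠ f b)) :
    (P.biUnion id).card ≤ 2 * P.card + ((P.biUnion id).sort (· ≤ ·)).countChanges f := by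
  induction P using Finset.strongInduction with
  | H P ih =>
  rcases P.eq_empty_or_nonempty with rfl | hne
  · simp
  obtain ⟨B, hB, hBint⟩ := hP.exists_ordConnectedIn hdisj hne
  have hBS : B ⊆ P.biUnion id := subset_biUnion_of_mem id hB
  have herase : (P.erase B).biUnion id = P.biUnion id \ B := by
    ext x
    simp only [mem_biUnion, mem_erase, mem_sdiff, id]
    constructor
    · rintro ⟨C, ⟨hCB, hC⟩, hxC⟩
      exact ⟨⟨C, hC, hxC⟩, disjoint_left.1 (hdisj hC hB hCB) hxC⟩
    · rintro ⟨⟨C, hC, hxC⟩, hxB⟩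
      exact ⟨C, ⟨fun h => hxB (h ▸ hxC), hC⟩, hxC⟩
  have ih := ih (P.erase B) (erase_ssubset hB) (hdisj.subset (erase_subset _ _))
    (hP.subset (erase_subset _ _)) fun C hC => halt C (mem_of_mem_erase hC)
  rw [herase] at ih
  have hsplit := countChanges_sort_sdiff_add_le f hBS hBint
  have hBlen := List.length_le_countChanges_add_one f (halt B hB)
  rw [length_sort] at hBlen
  have := card_sdiff_add_card_eq_card hBS
  have := card_erase_add_one hB
  omega

end NonCrossingBlocks

theorem Finpartition.card_sdiff_pairs_add_le {α : Type*} [DecidableEq α] {s : Finset α}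
    (P : Finpartition s) (heven : ∀ B ∈ P.parts, Even B.card) :
    (s \ (P.parts.filter fun B => B.card = 2).biUnion id).card + 4 * P.parts.card ≤
      2 * s.card := by
  have hpairs : ∑ B ∈ P.parts.filter (fun B => B.card = 2), B.card =
      2 * (P.parts.filter fun B => B.card = 2).card := by
    rw [sum_congr rfl fun B hB => (mem_filter.1 hB).2, sum_const, smul_eq_mul, mul_comm]
  have hlarge : 4 * (P.parts.filter fun B => ¬ B.card = 2).card ≤
      ∑ B ∈ P.parts.filter (fun B => ¬ B.card = 2), B.card := by
    rw [mul_comm, ← smul_eq_mul]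
    refine card_nsmul_le_sum _ _ _ fun B hB => ?_
    obtain ⟨hB, hB2⟩ := mem_filter.1 hB
    obtain ⟨r, hr⟩ := heven B hB
    have := (P.nonempty_of_mem_parts hB).card_pos
    show 4 ≤ B.card
    omega
  have hA : ((P.parts.filter fun B => B.card = 2).biUnion id).card =
      ∑ B ∈ P.parts.filter (fun B => B.card = 2), B.card :=
    card_biUnion (P.disjoint.subset (filter_subset _ _))
  have hAs : (P.parts.filter fun B => B.card = 2).biUnion id ⊆ s :=
    (biUnion_subset_biUnion_of_subset_left _ (filter_subset _ _)).trans P.biUnion_parts.le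
  have := card_sdiff_add_card_eq_card hAs
  have := P.sum_card_parts
  have := sum_filter_add_sum_filter_not P.parts (fun B => B.card = 2) card
  have := card_filter_add_card_filter_not (s := P.parts) (p := fun B => B.card = 2)
  omega

theorem Finpartition.mem_of_not_disjoint_biUnion {α : Type*} [DecidableEq α] {s : Finset α}
    {σ : Finpartition s} {Q : Finset (Finset α)} (hQ : Q ⊆ σ.parts) {B : Finset α}
    (hB : B ∈ σ.parts) (h : ¬ Disjoint B (Q.biUnion id)) : B ∈ Q := by
  obtain ⟨x, hxB, hxQ⟩ := not_disjoint_iff.1 h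
  obtain ⟨C, hC, hxC⟩ := mem_biUnion.1 hxQ
  exact σ.eq_of_mem_parts hB (hQ hC) hxB hxC ▸ hC

theorem Finpartition.eq_of_mem_parts_iff_of_disjoint {α : Type*} [DecidableEq α] {s : Finset α}
    {σ₁ σ₂ : Finpartition s} {Q : Finset (Finset α)} (h₁ : Q ⊆ σ₁.parts) (h₂ : Q ⊆ σ₂.parts)
    (h : ∀ B, Disjoint B (Q.biUnion id) → (B ∈ σ₁.parts ↔ B ∈ σ₂.parts)) : σ₁ = σ₂ := by
  refine Finpartition.ext (Finset.ext fun B => ?_)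
  by_cases hB : Disjoint B (Q.biUnion id)
  · exact h B hB
  · exact ⟨fun hB₁ => h₂ (mem_of_not_disjoint_biUnion h₁ hB₁ hB),
      fun hB₂ => h₁ (mem_of_not_disjoint_biUnion h₂ hB₂ hB)⟩

theorem NonCrossing.nonCrossingBlocks {N : ℕ} {π : Finpartition (univ : Finset (Fin N))}
    (h : NonCrossing π) : NonCrossingBlocks π.parts := by
  intro B hB C hC s₁ hs₁ t₁ ht₁ s₂ hs₂ t₂ ht₂ h₁ h₂ h₃
  obtain ⟨D, hD, hs₁D, ht₁D⟩ := h s₁ t₁ s₂ t₂ h₁ h₂ h₃ ⟨B, hB, hs₁, hs₂⟩ ⟨C, hC, ht₁, ht₂⟩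
  exact (π.eq_of_mem_parts hD hB hs₁D hs₁).symm.trans (π.eq_of_mem_parts hD hC ht₁D ht₁)

theorem filter_card_eq_two_subset_parts {N : ℕ} {σ π : Finpartition (univ : Finset (Fin N))}
    (hσ : EvenPartition σ) (hσπ : Refines σ π) :
    π.parts.filter (fun B => B.card = 2) ⊆ σ.parts := by
  intro B hB
  obtain ⟨hB, hB2⟩ := mem_filter.1 hB
  obtain ⟨x, hx⟩ := card_pos.1 (hB2 ▸ two_pos : 0 < B.card)
  obtain ⟨C, hC, hxC⟩ := σ.exists_mem (mem_univ x)
  obtain ⟨D, hD, hCD⟩ := hσπ C hC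
  have hCB : C ⊆ B := π.eq_of_mem_parts hD hB (hCD hxC) hx ▸ hCD
  obtain ⟨r, hr⟩ := hσ C hC
  have := (σ.nonempty_of_mem_parts hC).card_pos
  rwa [← eq_of_subset_of_card_le hCB (by omega)]

theorem countChanges_epsd_le (d m : ℕ) :
    ((univ : Finset (Fin (2 * d * m))).sort (· ≤ ·)).countChanges (epsd d m) ≤ 2 * m :=
  List.countChanges_le_of_pairwise (g := fun j => j.val / d) (fun a b h => by simp [epsd, h])
    ((pairwise_sort _ _).imp fun h => Nat.div_le_div_right h)
    fun j _ => Nat.div_le_of_le_mul (j.2.trans_eq (by ring)).le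

theorem card_compl_pairs_le {d m : ℕ} {π : Finpartition (univ : Finset (Fin (2 * d * m)))}
    (hNC : NonCrossing π) (hπ : EpsPartition (epsd d m) π) :
    (univ \ (π.parts.filter fun B => B.card = 2).biUnion id).card ≤ 4 * m := by
  have hcount := card_biUnion_le_two_mul_card_add_countChanges (epsd d m) π.disjoint
    hNC.nonCrossingBlocks hπ.2
  rw [π.biUnion_parts, card_univ, Fintype.card_fin] at hcount
  have := countChanges_epsd_le d m
  have := π.card_sdiff_pairs_add_le hπ.1
  rw [card_univ, Fintype.card_fin] at this
  omega

theorem restriction_injective_general (d m : ℕ)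
    (π : Finpartition (univ : Finset (Fin (2*d*m))))
    (hNC : NonCrossing π) (hπ : EpsPartition (epsd d m) π)
    (A : Finset (Fin (2*d*m)))
    (hA : A = (π.parts.filter fun B => B.card = 2).biUnion id) :
    (∀ σ : Finpartition (univ : Finset (Fin (2*d*m))),
        NonCrossing σ → EpsPartition (epsd d m) σ → Refines σ π →
        ∀ B ∈ π.parts, B.card = 2 → B ∈ σ.parts) ∧
    ((univ \ A).card ≤ 4*m) ∧
    (∀ σ : Finpartition (univ : Finset (Fin (2*d*m))),
        NonCrossing σ → EpsPartition (epsd d m) σ → Refines σ π →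
        ∀ B ∈ σ.parts, Disjoint B A → Even B.card) ∧
    (∀ σ₁ σ₂ : Finpartition (univ : Finset (Fin (2*d*m))),
        NonCrossing σ₁ → EpsPartition (epsd d m) σ₁ → Refines σ₁ π →
        NonCrossing σ₂ → EpsPartition (epsd d m) σ₂ → Refines σ₂ π →
        (∀ B : Finset (Fin (2*d*m)), Disjoint B A →
            (B ∈ σ₁.parts ↔ B ∈ σ₂.parts)) →
        σ₁ = σ₂) := by
  subst hA
  refine ⟨fun σ _ hσ hσπ B hB hB2 =>
      filter_card_eq_two_subset_parts hσ.1 hσπ (mem_filter.2 ⟨hB, hB2⟩),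
    card_compl_pairs_le hNC hπ, fun σ _ hσ _ B hB _ => hσ.1 B hB, ?_⟩
  intro σ₁ σ₂ _ h₁ h₁π _ h₂ h₂π hagree
  exact Finpartition.eq_of_mem_parts_iff_of_disjoint
    (filter_card_eq_two_subset_parts h₁.1 h₁π) (filter_card_eq_two_subset_parts h₂.1 h₂π) hagree

/-- restriction-injectivity argument from the proof of
Lemma 3.6 of the paper: let `π` be a non-crossing `ε_d`-partition of `[2dm]`
and `A` the union of its two-element blocks.  Then (i) every two-element block
of `π` is a block of every non-crossing `ε_d`-partition `σ ≤ π`; the complement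
of `A` has at most `4m` elements; the blocks of such a `σ` lying in the
complement of `A` are even (and non-crossing, being blocks of `σ`); and (ii)
two such `σ`'s having the same restriction to the complement of `A` are equal. -/
theorem restriction_injective (d m : ℕ) (hd : 1 ≤ d) (hm : 1 ≤ m)
    (π : Finpartition (univ : Finset (Fin (2*d*m))))
    (hNC : NonCrossing π) (hπ : EpsPartition (epsd d m) π)
    (A : Finset (Fin (2*d*m)))
    (hA : A = (π.parts.filter fun B => B.card = 2).biUnion id) :
    (∀ σ : Finpartition (univ : Finset (Fin (2*d*m))),
        NonCrossing σ → EpsPartition (epsd d m) σ → Refines σ π →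
        ∀ B ∈ π.parts, B.card = 2 → B ∈ σ.parts) ∧
    ((univ \ A).card ≤ 4*m) ∧
    (∀ σ : Finpartition (univ : Finset (Fin (2*d*m))),
        NonCrossing σ → EpsPartition (epsd d m) σ → Refines σ π →
        ∀ B ∈ σ.parts, Disjoint B A → Even B.card) ∧
    (∀ σ₁ σ₂ : Finpartition (univ : Finset (Fin (2*d*m))),
        NonCrossing σ₁ → EpsPartition (epsd d m) σ₁ → Refines σ₁ π →
        NonCrossing σ₂ → EpsPartition (epsd d m) σ₂ → Refines σ₂ π →
        (∀ B : Finset (Fin (2*d*m)), Disjoint B A →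
            (B ∈ σ₁.parts ↔ B ∈ σ₂.parts)) →
        σ₁ = σ₂) :=
  restriction_injective_general d m π hNC hπ A hA
end
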